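/- Let m ≥ 2, α = [0; overline{1,m}], and let V = {n ∈ ℕ : ε_j(n) = 0 for j < k} with elements n_0 = 0 < n_1 < n_2 < ... in increasing order. Then for every v ≥ 1, the gap Q(v) = n_v − n_{v−1} belongs to {q_{k−1}, q_k}. -/

import Mathlib

open Finset
open scoped Classical

/-- e(x) = exp(2πi x) -/
noncomputable def e (x : ℝ) : ℂ := Complex.exp (2 * Real.pi * Complex.I * x)

/-- Denominators of α = [0; 1, m, 1, m, ...]. -/
def ostq (m : ℕ) : ℕ → ℕ
  | 0 => 1
  | 1 => 1
  | (i+2) => (if (i+2) % 2 = 0 then m * ostq m (i+1) else ostq m (i+1)) + ostq m i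

/-- φ(m) = (m + 2 + √(m² + 4m))/2. -/
noncomputable def phi (m : ℕ) : ℝ := ((m : ℝ) + 2 + Real.sqrt ((m : ℝ)^2 + 4*m)) / 2

/-- Partial quotients of α = [0; 1, m, 1, m, ...] : a_j = m if j even, 1 if j odd. -/
def pq (m j : ℕ) : ℕ := if j % 2 = 0 then m else 1

/-- Markov condition on digit sequences. -/
def Markov (m : ℕ) (ε : ℕ → ℕ) : Prop :=
  ε 0 < pq m 1 ∧ ∀ i, 1 ≤ i → ε i ≤ pq m (i+1) ∧ (ε i = pq m (i+1) → ε (i-1) = 0)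

/-- ε is the (finitely supported) Ostrowski digit sequence of n. -/
def IsOstRep (m n : ℕ) (ε : ℕ → ℕ) : Prop :=
  Markov m ε ∧ ∃ K, (∀ j, K ≤ j → ε j = 0) ∧ n = ∑ i ∈ Finset.range K, ε i * ostq m i

/-- The Ostrowski digits of n. -/
noncomputable def ostEps (m n : ℕ) : ℕ → ℕ :=
  if h : ∃ ε, IsOstRep m n ε then h.choose else fun _ => 0

/-- Ostrowski sum-of-digits function S_α. -/
noncomputable def Sfull (m n : ℕ) : ℕ := ∑ᶠ i, ostEps m n i

/-- Truncated Ostrowski sum-of-digits function S_{α,k}. -/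
noncomputable def Strunc (m k n : ℕ) : ℕ := ∑ i ∈ Finset.range k, ostEps m n i

/-- Distance to the nearest integer. -/
noncomputable def nint (x : ℝ) : ℝ := |x - round x|

/-! Ostrowski representations exist (greedily) and are unique, because a Markov digit string
supported below `K` has value `< q_K`. For a Markov string without digits below `k`, the
shortfall `q_J - ∑_{i<J} ε_i q_i` is either exactly `q_{k-1}` or at least `q_k`: a maximal digit at
`J - 1` forces a zero at `J - 2` and leaves the shortfall at `J - 2`. Comparing two elements
`n < x` of `V` at their highest differing digit then gives `x - n = q_{k-1}` or `x - n ≥ q_k`.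
Conversely, deleting the digits of `n + q_k` below `k` lowers it by less than `q_k` and lands in
`V`, so `V` meets `(n, n + q_k]`. -/

open Filter Function

theorem ostq_add_two (m i : ℕ) : ostq m (i + 2) = pq m (i + 2) * ostq m (i + 1) + ostq m i := by
  rw [ostq, pq]; split <;> simp

theorem ostq_pos (m : ℕ) : ∀ i, 0 < ostq m i
  | 0 | 1 => Nat.one_pos
  | i + 2 => by rw [ostq_add_two]; exact Nat.add_pos_right _ (ostq_pos m i)

theorem pq_pos {m : ℕ} (hm : 1 ≤ m) (j : ℕ) : 0 < pq m j := by
  unfold pq; split <;> omega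

theorem ostq_monotone {m : ℕ} (hm : 1 ≤ m) : Monotone (ostq m) := by
  refine monotone_nat_of_le_succ fun i => ?_
  cases i with
  | zero => rfl
  | succ i =>
    rw [ostq_add_two]
    nlinarith [pq_pos hm (i + 2)]

theorem self_le_ostq {m : ℕ} (hm : 1 ≤ m) : ∀ i, i ≤ ostq m i
  | 0 => Nat.zero_le _
  | 1 => le_rfl
  | i + 2 => by
    rw [ostq_add_two]
    nlinarith [self_le_ostq hm (i + 1), ostq_pos m i, pq_pos hm (i + 2)]

def ostVal (m K : ℕ) (ε : ℕ → ℕ) : ℕ := ∑ i ∈ range K, ε i * ostq m i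

section ostVal

variable {m K : ℕ} {ε ε' : ℕ → ℕ}

theorem ostVal_succ : ostVal m (K + 1) ε = ostVal m K ε + ε K * ostq m K :=
  sum_range_succ _ _

theorem ostVal_congr (h : ∀ i < K, ε i = ε' i) : ostVal m K ε = ostVal m K ε' :=
  sum_congr rfl fun i hi => by rw [h i (mem_range.1 hi)]

theorem ostVal_eq_of_le {L : ℕ} (h : ∀ i, K ≤ i → ε i = 0) (hKL : K ≤ L) :
    ostVal m L ε = ostVal m K ε := by
  induction L, hKL using Nat.le_induction with
  | base => rfl
  | succ L hKL ih => rw [ostVal_succ, ih, h L hKL, zero_mul, add_zero]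

theorem ostVal_eq_zero {k : ℕ} (hlow : ∀ j < k, ε j = 0) (hK : K ≤ k) : ostVal m K ε = 0 :=
  sum_eq_zero fun i hi => by rw [hlow i (by simp at hi; omega), zero_mul]

theorem ostVal_eq_zero_or_ostq_le {k : ℕ} (hm : 1 ≤ m) (hlow : ∀ j < k, ε j = 0) :
    ∀ K, ostVal m K ε = 0 ∨ ostq m k ≤ ostVal m K ε
  | 0 => Or.inl rfl
  | K + 1 => by
    rw [ostVal_succ]
    rcases Nat.eq_zero_or_pos (ε K) with h | h
    · rw [h, zero_mul, add_zero]; exact ostVal_eq_zero_or_ostq_le hm hlow K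
    · have hkK : k ≤ K := by by_contra hK; exact h.ne' (hlow K (by omega))
      have := ostq_monotone hm hkK
      have := Nat.le_mul_of_pos_left (ostq m K) h
      omega

end ostVal

section Markov

variable {m : ℕ} {ε ε' : ℕ → ℕ}

theorem Markov.apply_zero (hε : Markov m ε) : ε 0 = 0 := by
  simpa [pq] using hε.1

theorem Markov.le (hε : Markov m ε) (i : ℕ) : ε i ≤ pq m (i + 1) := by
  rcases Nat.eq_zero_or_pos i with rfl | hi
  · simp [hε.apply_zero]
  · exact (hε.2 i hi).1

theorem Markov.ostVal_lt (hε : Markov m ε) : ∀ K, ostVal m K ε < ostq m K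
  | 0 => Nat.one_pos
  | 1 => by simp [ostVal, hε.apply_zero, ostq]
  | K + 2 => by
    rw [ostVal_succ, ostq_add_two]
    rcases (show ε (K + 1) ≤ pq m (K + 2) from hε.le (K + 1)).lt_or_eq with hlt | heq
    · have := hε.ostVal_lt (K + 1)
      have := Nat.mul_le_mul_right (ostq m (K + 1)) hlt
      rw [Nat.succ_mul] at this
      omega
    · have h0 : ε K = 0 := (hε.2 (K + 1) (by omega)).2 heq
      rw [ostVal_succ, h0, heq]
      have := hε.ostVal_lt K
      omega

theorem Markov.ostVal_succ_div (hε : Markov m ε) (K : ℕ) :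
    ostVal m (K + 1) ε / ostq m K = ε K := by
  rw [ostVal_succ, Nat.add_mul_div_right _ _ (ostq_pos m K),
    Nat.div_eq_of_lt (hε.ostVal_lt K), zero_add]

theorem Markov.ostVal_succ_mod (hε : Markov m ε) (K : ℕ) :
    ostVal m (K + 1) ε % ostq m K = ostVal m K ε := by
  rw [ostVal_succ, Nat.add_mul_mod_self_right, Nat.mod_eq_of_lt (hε.ostVal_lt K)]

theorem Markov.eq_of_ostVal_eq (hε : Markov m ε) (hε' : Markov m ε') :
    ∀ {K}, ostVal m K ε = ostVal m K ε' → ∀ i < K, ε i = ε' i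
  | 0, _, _, hi => absurd hi (Nat.not_lt_zero _)
  | K + 1, h, i, hi => by
    rcases (Nat.lt_succ_iff.1 hi).lt_or_eq with hi | rfl
    · refine hε.eq_of_ostVal_eq hε' ?_ i hi
      rw [← hε.ostVal_succ_mod, ← hε'.ostVal_succ_mod, h]
    · rw [← hε.ostVal_succ_div, ← hε'.ostVal_succ_div, h]

theorem Markov.update {K c : ℕ} (hm : 1 ≤ m) (hε : Markov m ε) (hK : 1 ≤ K)
    (hvan : ∀ i, K ≤ i → ε i = 0) (hc : c ≤ pq m (K + 1))
    (hc' : c = pq m (K + 1) → ε (K - 1) = 0) : Markov m (update ε K c) := by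
  refine ⟨by rw [update_of_ne (by omega)]; exact hε.1, fun i hi => ?_⟩
  rcases lt_trichotomy i K with hiK | rfl | hiK
  · rw [update_of_ne hiK.ne, update_of_ne (by omega)]
    exact hε.2 i hi
  · rw [update_self, update_of_ne (by omega)]
    exact ⟨hc, hc'⟩
  · rw [update_of_ne hiK.ne', hvan i hiK.le]
    exact ⟨Nat.zero_le _, fun h => absurd h.symm (pq_pos hm _).ne'⟩

end Markov

section Representation

variable {m n : ℕ} {ε ε' : ℕ → ℕ}

theorem markov_zero : Markov m 0 :=
  ⟨by simp [pq], fun _ _ => ⟨Nat.zero_le _, fun _ => rfl⟩⟩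

theorem exists_markov_ostVal_eq (hm : 1 ≤ m) :
    ∀ K n, n < ostq m K → ∃ ε, Markov m ε ∧ (∀ i, K ≤ i → ε i = 0) ∧ ostVal m K ε = n
  | 0, n, hn | 1, n, hn => ⟨0, markov_zero, fun _ _ => rfl, by simp [ostq] at hn; simp [hn, ostVal]⟩
  | K + 2, n, hn => by
    rw [ostq_add_two] at hn
    set c := min (n / ostq m (K + 1)) (pq m (K + 2)) with hc
    have hcn : c * ostq m (K + 1) ≤ n :=
      (Nat.mul_le_mul_right _ (min_le_left _ _)).trans (Nat.div_mul_le_self _ _)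
    have hr_top : c = pq m (K + 2) → n - c * ostq m (K + 1) < ostq m K := by
      intro h; rw [h] at hcn ⊢; omega
    have hr : n - c * ostq m (K + 1) < ostq m (K + 1) := by
      rcases min_choice (n / ostq m (K + 1)) (pq m (K + 2)) with h | h <;> rw [← hc] at h
      · have := Nat.lt_div_mul_add (a := n) (ostq_pos m (K + 1))
        rw [← h] at this; omega
      · exact (hr_top h).trans_le (ostq_monotone hm (Nat.le_succ K))
    obtain ⟨ε, hε, hvan, hval⟩ := exists_markov_ostVal_eq hm (K + 1) _ hr
    refine ⟨update ε (K + 1) c, hε.update hm (by omega) hvan (min_le_right _ _) fun h => ?_,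
      fun i hi => by rw [update_of_ne (by omega), hvan i (by omega)], ?_⟩
    · rw [Nat.add_sub_cancel, ← hε.ostVal_succ_div, hval, Nat.div_eq_of_lt (hr_top h)]
    · rw [ostVal_succ, update_self, ostVal_congr fun i hi => update_of_ne hi.ne _ _, hval]
      omega

theorem IsOstRep.eventually_ostVal_eq (h : IsOstRep m n ε) : ∀ᶠ L in atTop, ostVal m L ε = n := by
  obtain ⟨-, K, hK, rfl⟩ := h
  filter_upwards [eventually_ge_atTop K] with L hL using ostVal_eq_of_le hK hL

theorem IsOstRep.unique (h : IsOstRep m n ε) (h' : IsOstRep m n ε') : ε = ε' := by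
  funext i
  obtain ⟨L, hL, hL', hiL⟩ := (h.eventually_ostVal_eq.and
    (h'.eventually_ostVal_eq.and (eventually_gt_atTop i))).exists
  exact h.1.eq_of_ostVal_eq h'.1 (hL.trans hL'.symm) i hiL

theorem ostEps_eq_of_isOstRep (h : IsOstRep m n ε) : ostEps m n = ε := by
  have hex : ∃ ε, IsOstRep m n ε := ⟨ε, h⟩
  rw [ostEps, dif_pos hex]
  exact hex.choose_spec.unique h

theorem isOstRep_ostEps (hm : 1 ≤ m) (n : ℕ) : IsOstRep m n (ostEps m n) := by
  obtain ⟨ε, hε, hvan, hval⟩ := exists_markov_ostVal_eq hm (n + 1) n (self_le_ostq hm (n + 1))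
  have h : IsOstRep m n ε := ⟨hε, n + 1, hvan, hval.symm⟩
  rwa [ostEps_eq_of_isOstRep h]

end Representation

def highDigits (k : ℕ) (ε : ℕ → ℕ) : ℕ → ℕ := fun i => if i < k then 0 else ε i

section HighDigits

variable {m k : ℕ} {ε : ℕ → ℕ}

theorem highDigits_of_lt {i : ℕ} (hi : i < k) : highDigits k ε i = 0 := if_pos hi

theorem markov_highDigits (hε : Markov m ε) : Markov m (highDigits k ε) := by
  refine ⟨?_, fun i hi => ?_⟩
  · unfold highDigits; split
    · simp [pq]
    · exact hε.1
  · by_cases hik : i < k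
    · simp [highDigits_of_lt hik, highDigits_of_lt (show i - 1 < k by omega)]
    · simp only [highDigits, if_neg hik]
      refine ⟨(hε.2 i hi).1, fun h => ?_⟩
      simp [(hε.2 i hi).2 h]

theorem ostVal_eq_ostVal_add_highDigits {L : ℕ} (hkL : k ≤ L) :
    ostVal m L ε = ostVal m k ε + ostVal m L (highDigits k ε) := by
  induction L, hkL using Nat.le_induction with
  | base => rw [ostVal_eq_zero (fun j => highDigits_of_lt) le_rfl, add_zero]
  | succ L hkL ih =>
    rw [ostVal_succ, ostVal_succ, ih, highDigits, if_neg (by omega)]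
    ring

end HighDigits

def AdmissibleGap (m k d : ℕ) : Prop := d = ostq m (k - 1) ∨ ostq m k ≤ d

section Gap

variable {m k : ℕ} {ε ε' : ℕ → ℕ}

theorem Markov.admissibleGap_ostq_sub_ostVal (hm : 1 ≤ m) (hk : 1 ≤ k) (hε : Markov m ε)
    (hlow : ∀ j < k, ε j = 0) : ∀ J, k ≤ J → AdmissibleGap m k (ostq m J - ostVal m J ε) := by
  intro J hJ
  induction J using Nat.strong_induction_on with
  | _ J ih =>
  rcases hJ.eq_or_lt with rfl | hkJ
  · right; rw [ostVal_eq_zero hlow le_rfl]; omega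
  obtain ⟨I, rfl⟩ : ∃ I, J = I + 2 := ⟨J - 2, by omega⟩
  have hrec := ostq_add_two m I
  have hlt := hε.ostVal_lt (I + 1)
  have hval : ostVal m (I + 2) ε = ostVal m (I + 1) ε + ε (I + 1) * ostq m (I + 1) := ostVal_succ
  rw [hval]
  rcases (show ε (I + 1) ≤ pq m (I + 2) from hε.le (I + 1)).lt_or_eq with hdig | hdig
  · -- a non-maximal top digit leaves at least `q_I + (q_{I+1} - val)`, and `q_k ≤ q_I` or `val = 0`
    right
    have := Nat.mul_le_mul_right (ostq m (I + 1)) hdig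
    rw [Nat.succ_mul] at this
    rcases (show k ≤ I + 1 by omega).lt_or_eq with hkI | rfl
    · have := ostq_monotone hm (show k ≤ I by omega)
      omega
    · rw [ostVal_eq_zero hlow le_rfl]
      omega
  · -- a maximal top digit forces the digit below it to vanish; the shortfall is then that at `I`
    have h0 : ε I = 0 := (hε.2 (I + 1) (by omega)).2 hdig
    have hval' : ostVal m (I + 1) ε = ostVal m I ε + ε I * ostq m I := ostVal_succ
    have hsub : ostq m (I + 2) - (ostVal m (I + 1) ε + ε (I + 1) * ostq m (I + 1)) =
        ostq m I - ostVal m I ε := by rw [hval', h0, hdig, hrec]; omega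
    rw [hsub]
    rcases (show k ≤ I + 1 by omega).lt_or_eq with hkI | rfl
    · exact ih I (by omega) (by omega)
    · left; rw [ostVal_eq_zero hlow (Nat.le_succ I), Nat.add_sub_cancel, Nat.sub_zero]

theorem Markov.admissibleGap_ostVal_sub_ostVal (hm : 1 ≤ m) (hk : 1 ≤ k) (hε : Markov m ε)
    (hε' : Markov m ε') (hlow : ∀ j < k, ε j = 0) (hlow' : ∀ j < k, ε' j = 0) :
    ∀ {L}, ostVal m L ε < ostVal m L ε' →
      AdmissibleGap m k (ostVal m L ε' - ostVal m L ε)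
  | 0, h => absurd h (lt_irrefl 0)
  | L + 1, h => by
    rw [ostVal_succ, ostVal_succ] at h ⊢
    have hv := hε.ostVal_lt L
    have hv' := hε'.ostVal_lt L
    rcases lt_trichotomy (ε L) (ε' L) with hdig | hdig | hdig
    · have hkL : k ≤ L := by
        by_contra hL; rw [hlow L (by omega), hlow' L (by omega)] at hdig; exact lt_irrefl 0 hdig
      have hB := hε.admissibleGap_ostq_sub_ostVal hm hk hlow L hkL
      have hq := ostq_monotone hm hkL
      have hZ := ostVal_eq_zero_or_ostq_le (m := m) hm hlow' L
      have hD : ε' L * ostq m L = ε L * ostq m L + ostq m L ∨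
          ε L * ostq m L + 2 * ostq m L ≤ ε' L * ostq m L := by
        rcases (Nat.succ_le_of_lt hdig).eq_or_lt with h1 | h1
        · left; rw [← h1, Nat.succ_mul]
        · right; have := Nat.mul_le_mul_right (ostq m L) (Nat.succ_le_of_lt h1)
          rw [Nat.succ_mul, Nat.succ_mul] at this; omega
      unfold AdmissibleGap at hB ⊢
      omega
    · rw [hdig] at h
      rw [hdig, Nat.add_sub_add_right]
      exact hε.admissibleGap_ostVal_sub_ostVal hm hk hε' hlow hlow' (by omega)
    · have := Nat.mul_le_mul_right (ostq m L) (Nat.succ_le_of_lt hdig)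
      rw [Nat.succ_mul] at this
      omega

end Gap

section LowDigitsVanish

variable {m k : ℕ}

theorem admissibleGap_sub_of_ostEps_eq_zero (hm : 1 ≤ m) (hk : 1 ≤ k) {n x : ℕ}
    (hn : ∀ j < k, ostEps m n j = 0) (hx : ∀ j < k, ostEps m x j = 0) (hnx : n < x) :
    AdmissibleGap m k (x - n) := by
  have hrn := isOstRep_ostEps hm n
  have hrx := isOstRep_ostEps hm x
  obtain ⟨L, hLn, hLx⟩ := (hrn.eventually_ostVal_eq.and hrx.eventually_ostVal_eq).exists
  rw [← hLn, ← hLx] at hnx ⊢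
  exact hrn.1.admissibleGap_ostVal_sub_ostVal hm hk hrx.1 hn hx hnx

theorem exists_ostEps_eq_zero_mem_Ioc (hm : 1 ≤ m) (n : ℕ) :
    ∃ y ∈ Set.Ioc n (n + ostq m k), ∀ j < k, ostEps m y j = 0 := by
  obtain ⟨hδ, K, hK, hval⟩ := isOstRep_ostEps hm (n + ostq m k)
  set δ := ostEps m (n + ostq m k)
  set L := max K k
  have hH : IsOstRep m (ostVal m L (highDigits k δ)) (highDigits k δ) :=
    ⟨markov_highDigits hδ, L, fun i hi => by simp [highDigits, hK i (le_of_max_le_left hi)], rfl⟩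
  have hsplit : n + ostq m k = ostVal m k δ + ostVal m L (highDigits k δ) := by
    rw [← ostVal_eq_ostVal_add_highDigits (le_max_right K k), ostVal_eq_of_le hK (le_max_left K k)]
    exact hval
  have hlt := hδ.ostVal_lt k
  refine ⟨ostVal m L (highDigits k δ), ⟨by omega, by omega⟩, fun j hj => ?_⟩
  rw [ostEps_eq_of_isOstRep hH, highDigits_of_lt hj]

end LowDigitsVanish

theorem stmt13_general (m k : ℕ) (hm : 2 ≤ m) (hk : 2 ≤ k) (nv : ℕ → ℕ)
    (hmono : StrictMono nv)
    (hrange : ∀ x : ℕ, (∃ v, nv v = x) ↔ ∀ j, j < k → ostEps m x j = 0) :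
    ∀ v : ℕ, 1 ≤ v → nv v - nv (v - 1) = ostq m (k - 1) ∨ nv v - nv (v - 1) = ostq m k := by
  intro v hv
  have hnext : ∀ y, (∀ j < k, ostEps m y j = 0) → nv (v - 1) < y → nv v ≤ y := by
    rintro y hy hlt
    obtain ⟨w, rfl⟩ := (hrange y).2 hy
    exact hmono.monotone (by have := hmono.lt_iff_lt.1 hlt; omega)
  obtain ⟨y, ⟨hny, hyn⟩, hy⟩ :=
    exists_ostEps_eq_zero_mem_Ioc (m := m) (k := k) (by omega) (nv (v - 1))
  have hgap := admissibleGap_sub_of_ostEps_eq_zero (by omega) (by omega)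
    ((hrange _).1 ⟨v - 1, rfl⟩) ((hrange _).1 ⟨v, rfl⟩) (hmono (by omega : v - 1 < v))
  have := hnext y hy hny
  rcases hgap with h | h <;> omega

theorem stmt13 (m k : ℕ) (hm : 2 ≤ m) (hk : 2 ≤ k) (nv : ℕ → ℕ)
    (hmono : StrictMono nv) (h0 : nv 0 = 0)
    (hrange : ∀ x : ℕ, (∃ v, nv v = x) ↔ ∀ j, j < k → ostEps m x j = 0) :
    ∀ v : ℕ, 1 ≤ v → nv v - nv (v - 1) = ostq m (k - 1) ∨ nv v - nv (v - 1) = ostq m k :=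
  stmt13_general m k hm hk nv hmono hrange
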